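/- Let f : ℝⁿ → ℝ be differentiable and α-weakly-quasi-convex with respect to a minimizer x* for some α ∈ (0,1], i.e. α·(f(x*) − f(y)) ≥ ⟨∇f(y), x* − y⟩ for all y. Fix p > 0, C > 0, ζ ≥ 1. Suppose X : (0,∞) → ℝⁿ is twice differentiable, satisfies X''(t) + ((ζp+α)/(αt))·X'(t) + C·p²·t^(p-2)·∇f(X(t)) = 0, with X(0) = x₀ and t·X'(t) → 0 as t → 0⁺. Then for all t > 0, f(X(t)) − f(x*) ≤ ζ·‖x₀ − x*‖² / (2C·α²·t^p). -/

import Mathlib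

/-!
The energy `E = bregmanLyapunov` is nonincreasing along the flow: substituting the ODE, its
derivative is
`C α p t^(p-1) (α (f(X t) - f x*) + ⟪∇f(X t), x* - X t⟫) - (ζ - 1) (α t / p) ‖X'(t)‖²`,
whose first term is nonpositive by weak quasi-convexity and whose second is nonpositive as `ζ ≥ 1`.
As `t → 0⁺` we have `tᵖ → 0`, `t X'(t) → 0` and `X(t) → x₀`, so `E(t) → ζ/2 ‖x₀ - x*‖²`.
Hence `C α² tᵖ (f(X t) - f x*) ≤ E(t) ≤ ζ/2 ‖x₀ - x*‖²` for every `t > 0`.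
-/

open Real Set Filter Topology
open scoped RealInnerProductSpace

variable {F : Type*} [NormedAddCommGroup F] [InnerProductSpace ℝ F]

theorem DifferentiableAt.hasDerivAt_comp_inner_gradient [CompleteSpace F] {f : F → ℝ}
    {X : ℝ → F} {v : F} {t : ℝ} (hf : DifferentiableAt ℝ f (X t)) (hX : HasDerivAt X v t) :
    HasDerivAt (fun s => f (X s)) ⟪gradient f (X t), v⟫ t :=
  hf.hasGradientAt.hasFDerivAt.comp_hasDerivAt t hX

theorem AntitoneOn.le_of_tendsto_nhdsGT {g : ℝ → ℝ} {a L t : ℝ} (hg : AntitoneOn g (Ioi a))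
    (hlim : Tendsto g (𝓝[>] a) (𝓝 L)) (ht : a < t) : g t ≤ L :=
  ge_of_tendsto hlim <| by
    filter_upwards [Ioo_mem_nhdsGT ht] with s hs
    exact hg hs.1 ht hs.2.le

noncomputable def bregmanLyapunov (f : F → ℝ) (xstar : F) (α p C ζ : ℝ) (X X' : ℝ → F)
    (t : ℝ) : ℝ :=
  C * α ^ 2 * t ^ p * (f (X t) - f xstar) + (ζ - 1) / 2 * ‖xstar - X t‖ ^ 2
    + 1 / 2 * ‖(α * t / p) • X' t - (xstar - X t)‖ ^ 2

section Lyapunov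

variable {f : F → ℝ} {xstar : F} {α p C ζ : ℝ} {X X' X'' : ℝ → F}

theorem hasDerivAt_bregmanLyapunov [CompleteSpace F] {t : ℝ} (hf : DifferentiableAt ℝ f (X t))
    (ht : t ≠ 0) (hX : HasDerivAt X (X' t) t) (hX' : HasDerivAt X' (X'' t) t) :
    HasDerivAt (bregmanLyapunov f xstar α p C ζ X X')
      (C * α ^ 2 * (p * t ^ (p - 1) * (f (X t) - f xstar) + t ^ p * ⟪gradient f (X t), X' t⟫)
        - (ζ - 1) * ⟪xstar - X t, X' t⟫
        + ⟪(α * t / p) • X' t - (xstar - X t), (α * t / p) • X'' t + (α / p) • X' t + X' t⟫)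
      t := by
  have hgap : HasDerivAt (fun s => xstar - X s) (-X' t) t := by
    simpa using (hasDerivAt_const t xstar).fun_sub hX
  have hcoef : HasDerivAt (fun s : ℝ => α * s / p) (α / p) t := by
    simpa using ((hasDerivAt_id t).const_mul α).div_const p
  have hvel : HasDerivAt (fun s => (α * s / p) • X' s - (xstar - X s))
      ((α * t / p) • X'' t + (α / p) • X' t + X' t) t := by
    refine ((hcoef.fun_smul hX').fun_sub hgap).congr_deriv ?_
    module
  have hval : HasDerivAt (fun s => f (X s) - f xstar) ⟪gradient f (X t), X' t⟫ t :=
    (hf.hasDerivAt_comp_inner_gradient hX).sub_const _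
  refine ((((hasDerivAt_rpow_const (Or.inl ht)).const_mul (C * α ^ 2)).fun_mul hval).fun_add
    (hgap.norm_sq.const_mul ((ζ - 1) / 2))).fun_add (hvel.norm_sq.const_mul (1 / 2))
    |>.congr_deriv ?_
  simp only [inner_neg_right]
  ring

theorem hasDerivAt_bregmanLyapunov_of_ode [CompleteSpace F] {t : ℝ}
    (hf : DifferentiableAt ℝ f (X t)) (ht : 0 < t) (hα : α ≠ 0) (hp : p ≠ 0)
    (hX : HasDerivAt X (X' t) t) (hX' : HasDerivAt X' (X'' t) t)
    (hode : X'' t + ((ζ * p + α) / (α * t)) • X' t + (C * p ^ 2 * t ^ (p - 2)) • gradient f (X t)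
      = 0) :
    HasDerivAt (bregmanLyapunov f xstar α p C ζ X X')
      (C * α * p * t ^ (p - 1) * (α * (f (X t) - f xstar) + ⟪gradient f (X t), xstar - X t⟫)
        - (ζ - 1) * (α * t / p) * ‖X' t‖ ^ 2) t := by
  have hpow : t ^ (p - 1) = t ^ (p - 2) * t := by
    rw [← rpow_add_one ht.ne']; ring_nf
  have hpow' : t ^ p = t ^ (p - 1) * t := by
    rw [← rpow_add_one ht.ne']; ring_nf
  have hdamp : α * t / p * ((ζ * p + α) / (α * t)) = ζ + α / p := by
    field_simp
  have hforce : α * t / p * (C * p ^ 2 * t ^ (p - 2)) = C * α * p * t ^ (p - 1) := by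
    rw [hpow]; field_simp
  have hvel : (α * t / p) • X'' t + (α / p) • X' t + X' t
      = (1 - ζ) • X' t - (C * α * p * t ^ (p - 1)) • gradient f (X t) := by
    rw [eq_neg_of_add_eq_zero_left ((add_assoc _ _ _).symm.trans hode), smul_neg, smul_add,
      smul_smul, smul_smul, hdamp, hforce]
    module
  refine (hasDerivAt_bregmanLyapunov hf ht.ne' hX hX').congr_deriv ?_
  rw [hvel, hpow']
  simp only [inner_sub_left, inner_sub_right, inner_smul_left, inner_smul_right,
    real_inner_self_eq_norm_sq, RCLike.conj_to_real]
  rw [real_inner_comm (gradient f (X t)) (X' t), real_inner_comm (gradient f (X t)) xstar,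
    real_inner_comm (gradient f (X t)) (X t)]
  field_simp
  ring

theorem bregmanLyapunov_antitoneOn [CompleteSpace F] (hf : Differentiable ℝ f)
    (hwqc : ∀ y, α * (f xstar - f y) ≥ ⟪gradient f y, xstar - y⟫) (hα : 0 < α) (hp : 0 < p)
    (hC : 0 ≤ C) (hζ : 1 ≤ ζ) (hX : ∀ t > (0:ℝ), HasDerivAt X (X' t) t)
    (hX' : ∀ t > (0:ℝ), HasDerivAt X' (X'' t) t)
    (hode : ∀ t > (0:ℝ),
      X'' t + ((ζ * p + α) / (α * t)) • X' t + (C * p ^ 2 * t ^ (p - 2)) • gradient f (X t) = 0) :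
    AntitoneOn (bregmanLyapunov f xstar α p C ζ X X') (Ioi 0) := by
  have hderiv (t : ℝ) (ht : 0 < t) := hasDerivAt_bregmanLyapunov_of_ode (xstar := xstar)
    (hf (X t)) ht hα.ne' hp.ne' (hX t ht) (hX' t ht) (hode t ht)
  refine antitoneOn_of_deriv_nonpos (convex_Ioi 0)
    (fun t ht => (hderiv t ht).continuousAt.continuousWithinAt)
    (fun t ht => (hderiv t (interior_Ioi.subset ht)).differentiableAt.differentiableWithinAt)
    (fun t ht => ?_)
  rw [interior_Ioi, mem_Ioi] at ht
  rw [(hderiv t ht).deriv]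
  have hdescent : α * (f (X t) - f xstar) + ⟪gradient f (X t), xstar - X t⟫ ≤ 0 := by
    linarith [hwqc (X t)]
  have hfriction : 0 ≤ (ζ - 1) * (α * t / p) * ‖X' t‖ ^ 2 :=
    mul_nonneg (mul_nonneg (sub_nonneg.2 hζ) (by positivity)) (sq_nonneg _)
  linarith [mul_nonpos_of_nonneg_of_nonpos (by positivity : 0 ≤ C * α * p * t ^ (p - 1))
    hdescent]

theorem tendsto_bregmanLyapunov_nhdsGT_zero {x₀ : F} (hf : ContinuousAt f x₀) (hp : 0 < p)
    (hX0 : Tendsto X (𝓝[>] 0) (𝓝 x₀)) (hV0 : Tendsto (fun t => t • X' t) (𝓝[>] 0) (𝓝 0)) :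
    Tendsto (bregmanLyapunov f xstar α p C ζ X X') (𝓝[>] 0) (𝓝 (ζ / 2 * ‖x₀ - xstar‖ ^ 2)) := by
  have hpow : Tendsto (fun t : ℝ => t ^ p) (𝓝[>] 0) (𝓝 0) := by
    simpa [zero_rpow hp.ne'] using
      (continuousAt_rpow_const 0 p (Or.inr hp.le)).tendsto.mono_left nhdsWithin_le_nhds
  have hgap : Tendsto (fun t => xstar - X t) (𝓝[>] 0) (𝓝 (xstar - x₀)) :=
    tendsto_const_nhds.sub hX0
  have hvel : Tendsto (fun t => (α * t / p) • X' t - (xstar - X t)) (𝓝[>] 0)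
      (𝓝 (x₀ - xstar)) := by
    convert (hV0.const_smul (α / p)).sub hgap using 2 with t
    · rw [smul_smul]; ring_nf
    · simp
  have := (((hpow.const_mul (C * α ^ 2)).mul ((hf.tendsto.comp hX0).sub_const (f xstar))).add
    ((hgap.norm.pow 2).const_mul ((ζ - 1) / 2))).add ((hvel.norm.pow 2).const_mul (1 / 2))
  convert this using 2
  · rfl
  · rw [norm_sub_rev xstar x₀]
    ring

theorem mul_sub_le_bregmanLyapunov (hζ : 1 ≤ ζ) (t : ℝ) :
    C * α ^ 2 * t ^ p * (f (X t) - f xstar) ≤ bregmanLyapunov f xstar α p C ζ X X' t := by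
  have hgap : 0 ≤ (ζ - 1) / 2 * ‖xstar - X t‖ ^ 2 := mul_nonneg (by linarith) (sq_nonneg _)
  have hvel : 0 ≤ 1 / 2 * ‖(α * t / p) • X' t - (xstar - X t)‖ ^ 2 := by positivity
  unfold bregmanLyapunov
  linarith

end Lyapunov

theorem bregman_wqc_convergence_rate_general {n : ℕ}
    (f : EuclideanSpace ℝ (Fin n) → ℝ) (hf : Differentiable ℝ f)
    (α : ℝ) (hα0 : 0 < α)
    (xstar : EuclideanSpace ℝ (Fin n))
    (hwqc : ∀ y, α * (f xstar - f y) ≥ inner ℝ (gradient f y) (xstar - y))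
    (p C ζ : ℝ) (hp : 0 < p) (hC : 0 < C) (hζ : 1 ≤ ζ)
    (X X' X'' : ℝ → EuclideanSpace ℝ (Fin n)) (x₀ : EuclideanSpace ℝ (Fin n))
    (hX : ∀ t > (0:ℝ), HasDerivAt X (X' t) t)
    (hX' : ∀ t > (0:ℝ), HasDerivAt X' (X'' t) t)
    (hode : ∀ t > (0:ℝ),
      X'' t + ((ζ * p + α) / (α * t)) • X' t + (C * p ^ 2 * t ^ (p - 2)) • gradient f (X t) = 0)
    (hX0 : Tendsto X (nhdsWithin 0 (Ioi 0)) (nhds x₀))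
    (hV0 : Tendsto (fun t => t • X' t) (nhdsWithin 0 (Ioi 0)) (nhds 0)) :
    ∀ t > (0:ℝ), f (X t) - f xstar ≤ ζ * ‖x₀ - xstar‖ ^ 2 / (2 * C * α ^ 2 * t ^ p) := by
  intro t ht
  have hbound : bregmanLyapunov f xstar α p C ζ X X' t ≤ ζ / 2 * ‖x₀ - xstar‖ ^ 2 :=
    (bregmanLyapunov_antitoneOn hf hwqc hα0 hp hC.le hζ hX hX' hode).le_of_tendsto_nhdsGT
      (tendsto_bregmanLyapunov_nhdsGT_zero (hf x₀).continuousAt hp hX0 hV0) ht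
  have hlower : C * α ^ 2 * t ^ p * (f (X t) - f xstar) ≤ ζ / 2 * ‖x₀ - xstar‖ ^ 2 :=
    (mul_sub_le_bregmanLyapunov hζ t).trans hbound
  rw [le_div_iff₀ (by positivity)]
  linarith

/-- Convergence rate of the α-weakly-quasi-convex p-Bregman flow in ℝⁿ. -/
theorem bregman_wqc_convergence_rate {n : ℕ}
    (f : EuclideanSpace ℝ (Fin n) → ℝ) (hf : Differentiable ℝ f)
    (α : ℝ) (hα0 : 0 < α) (hα1 : α ≤ 1)
    (xstar : EuclideanSpace ℝ (Fin n)) (hmin : ∀ y, f xstar ≤ f y)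
    (hwqc : ∀ y, α * (f xstar - f y) ≥ inner ℝ (gradient f y) (xstar - y))
    (p C ζ : ℝ) (hp : 0 < p) (hC : 0 < C) (hζ : 1 ≤ ζ)
    (X X' X'' : ℝ → EuclideanSpace ℝ (Fin n)) (x₀ : EuclideanSpace ℝ (Fin n))
    (hX : ∀ t > (0:ℝ), HasDerivAt X (X' t) t)
    (hX' : ∀ t > (0:ℝ), HasDerivAt X' (X'' t) t)
    (hode : ∀ t > (0:ℝ),
      X'' t + ((ζ * p + α) / (α * t)) • X' t + (C * p ^ 2 * t ^ (p - 2)) • gradient f (X t) = 0)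
    (hX0 : Tendsto X (nhdsWithin 0 (Ioi 0)) (nhds x₀))
    (hV0 : Tendsto (fun t => t • X' t) (nhdsWithin 0 (Ioi 0)) (nhds 0)) :
    ∀ t > (0:ℝ), f (X t) - f xstar ≤ ζ * ‖x₀ - xstar‖ ^ 2 / (2 * C * α ^ 2 * t ^ p) :=
  bregman_wqc_convergence_rate_general f hf α hα0 xstar hwqc p C ζ hp hC hζ X X' X'' x₀ hX hX' hode
    hX0 hV0
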